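/- Let H be a nonempty axis-aligned region in ℝ^{n₁}×⋯×ℝ^{n_k} and let M : ℝ^{n₁}×⋯×ℝ^{n_k} → ℝ be multilinear. Then conv{(x, M(x)) : x ∈ H} = conv{(v, M(v)) : v ∈ corner(H)}; in particular, the convex hull of the graph of M over H is a polytope generated by the finitely many points (v, M(v)) with v ∈ corner(H). -/

import Mathlib

/-- `M` is multilinear in the block variables: fixing all blocks except the `j`-th yields an
affine map `ℝ^{n_j} → ℝ`. -/
def IsBlockMultilinear {k : ℕ} {n : Fin k → ℕ}
    (M : ((j : Fin k) → (Fin (n j) → ℝ)) → ℝ) : Prop :=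
  ∀ (j : Fin k) (x : (j : Fin k) → Fin (n j) → ℝ),
    ∃ A : (Fin (n j) → ℝ) →ᵃ[ℝ] ℝ, ∀ y : Fin (n j) → ℝ, M (Function.update x j y) = A y

/-- An axis-aligned region in `ℝ^{n₁} × ⋯ × ℝ^{n_k}`: a finite union of products of
polytopes (convex hulls of nonempty finite sets), one polytope per block. -/
def IsBlockAxisAligned {k : ℕ} {n : Fin k → ℕ}
    (H : Set ((j : Fin k) → Fin (n j) → ℝ)) : Prop :=
  ∃ (N : ℕ) (V : Fin N → (j : Fin k) → Finset (Fin (n j) → ℝ)),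
    (∀ i j, (V i j).Nonempty) ∧
    H = ⋃ i : Fin N, {x | ∀ j, x j ∈ convexHull ℝ ((V i j : Set (Fin (n j) → ℝ)))}

/-- The corner points of a region `H`: points of `H` each of whose block coordinates is an
extreme point of the convex hull of the corresponding slice of `H`. -/
def blockCornerSet {k : ℕ} {n : Fin k → ℕ}
    (H : Set ((j : Fin k) → Fin (n j) → ℝ)) : Set ((j : Fin k) → Fin (n j) → ℝ) :=
  {v | v ∈ H ∧ ∀ j, v j ∈ Set.extremePoints ℝ
    (convexHull ℝ {y : Fin (n j) → ℝ | Function.update v j y ∈ H})}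

/-!
Along each block `M` is affine, so the graph point `(x, M x)` is a convex combination of graph
points in which one block of `x` is replaced by vertices of its polytope. Doing this block by
block shows that the hull of the graph over `H` is the hull of the graph over the finitely many
cell vertices, so it is a polytope, the convex hull of its extreme points. If `(v, M v)` is such an
extreme point, it stays extreme when pulled back along the injective affine map
`y ↦ (update v j y, M (update v j y))` from the `j`-th slice, so `v` is a corner. Finally, every
corner is blockwise a vertex of a cell through it, so there are finitely many corners.
-/

open Set Function

section Convex

variable {𝕜 E F : Type*} [Field 𝕜] [LinearOrder 𝕜] [IsStrictOrderedRing 𝕜]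
  [AddCommGroup E] [Module 𝕜 E] [AddCommGroup F] [Module 𝕜 F]

lemma mem_of_mem_convexHull_of_mem_extremePoints {s t : Set E} {x : E} (hts : t ⊆ s)
    (hx : x ∈ convexHull 𝕜 t) (hext : x ∈ (convexHull 𝕜 s).extremePoints 𝕜) :
    x ∈ t :=
  extremePoints_convexHull_subset <|
    inter_extremePoints_subset_extremePoints_of_subset (convexHull_mono hts) ⟨hx, hext⟩

lemma AffineMap.mem_extremePoints_of_map_mem_extremePoints (f : E →ᵃ[𝕜] F) (hf : Injective f)
    {s : Set E} {t : Set F} (hst : MapsTo f s t) {x : E} (hx : x ∈ s)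
    (hfx : f x ∈ t.extremePoints 𝕜) : x ∈ s.extremePoints 𝕜 := by
  refine mem_extremePoints.2 ⟨hx, fun y₁ hy₁ y₂ hy₂ hseg => ?_⟩
  have hfseg : f x ∈ openSegment 𝕜 (f y₁) (f y₂) := by
    rw [← image_openSegment]
    exact mem_image_of_mem f hseg
  obtain ⟨h₁, h₂⟩ := (mem_extremePoints.1 hfx).2 _ (hst hy₁) _ (hst hy₂) hfseg
  exact ⟨hf h₁, hf h₂⟩

end Convex

lemma Set.Finite.convexHull_extremePoints_convexHull {E : Type*} [AddCommGroup E]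
    [Module ℝ E] [TopologicalSpace E] [T2Space E] [IsTopologicalAddGroup E] [ContinuousSMul ℝ E]
    [LocallyConvexSpace ℝ E] {A : Set E} (hA : A.Finite) :
    convexHull ℝ ((convexHull ℝ A).extremePoints ℝ) = convexHull ℝ A := by
  have hext : ((convexHull ℝ A).extremePoints ℝ).Finite :=
    hA.subset extremePoints_convexHull_subset
  rw [← (hext.isCompact_convexHull ℝ).isClosed.closure_eq]
  exact closure_convexHull_extremePoints (hA.isCompact_convexHull ℝ) (convex_convexHull ℝ A)

section Update

variable {𝕜 ι : Type*} [Ring 𝕜] [DecidableEq ι] {E : ι → Type*}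
  [∀ i, AddCommGroup (E i)] [∀ i, Module 𝕜 (E i)]

def AffineMap.update (x : ∀ i, E i) (j : ι) : E j →ᵃ[𝕜] ∀ i, E i :=
  (LinearMap.single 𝕜 E j).toAffineMap + AffineMap.const 𝕜 (E j) (Function.update x j 0)

@[simp]
lemma AffineMap.update_apply (x : ∀ i, E i) (j : ι) (y : E j) :
    AffineMap.update (𝕜 := 𝕜) x j y = Function.update x j y := by
  ext i
  by_cases h : i = j
  · subst h; simp [AffineMap.update]
  · simp [AffineMap.update, h]

end Update

variable {k : ℕ} {n : Fin k → ℕ} {M : ((j : Fin k) → Fin (n j) → ℝ) → ℝ}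

namespace IsBlockMultilinear

lemma exists_affineMap_eq_graph_update (hM : IsBlockMultilinear M)
    (x : (j : Fin k) → Fin (n j) → ℝ) (j : Fin k) :
    ∃ f : (Fin (n j) → ℝ) →ᵃ[ℝ] ((j : Fin k) → Fin (n j) → ℝ) × ℝ,
      ∀ y, f y = (update x j y, M (update x j y)) := by
  obtain ⟨A, hA⟩ := hM j x
  exact ⟨(AffineMap.update x j).prod A, fun y => by simp [AffineMap.prod_apply, hA]⟩

lemma graph_mem_convexHull_graphOn_update (hM : IsBlockMultilinear M)
    {x : (j : Fin k) → Fin (n j) → ℝ} {j : Fin k} {S : Set (Fin (n j) → ℝ)}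
    (hx : x j ∈ convexHull ℝ S) :
    (x, M x) ∈ convexHull ℝ (graphOn M (update x j '' S)) := by
  obtain ⟨f, hf⟩ := hM.exists_affineMap_eq_graph_update x j
  have himage : f '' S = graphOn M (update x j '' S) := by
    rw [graphOn, image_image]
    exact image_congr fun y _ => hf y
  have hfx : f (x j) = (x, M x) := by rw [hf, update_eq_self]
  rw [← hfx, ← himage, ← f.image_convexHull]
  exact mem_image_of_mem f hx

lemma graph_mem_convexHull_graphOn_of_forall_mem (hM : IsBlockMultilinear M)
    (V : (j : Fin k) → Set (Fin (n j) → ℝ)) (s : Finset (Fin k)) :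
    ∀ x : (j : Fin k) → Fin (n j) → ℝ, (∀ j ∈ s, x j ∈ convexHull ℝ (V j)) →
      (x, M x) ∈
        convexHull ℝ (graphOn M {z | (∀ j ∈ s, z j ∈ V j) ∧ ∀ j ∉ s, z j = x j}) := by
  induction s using Finset.induction_on with
  | empty =>
    intro x _
    exact subset_convexHull ℝ _ ⟨x, ⟨by simp, fun _ _ => rfl⟩, rfl⟩
  | insert a s has ih =>
    intro x hx
    refine convexHull_min ?_ (convex_convexHull ℝ _)
      (hM.graph_mem_convexHull_graphOn_update (hx a (Finset.mem_insert_self a s)))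
    rintro _ ⟨_, ⟨w, hw, rfl⟩, rfl⟩
    have hy : ∀ j ∈ s, update x a w j ∈ convexHull ℝ (V j) := fun j hj => by
      rw [update_of_ne (ne_of_mem_of_not_mem hj has)]
      exact hx j (Finset.mem_insert_of_mem hj)
    refine convexHull_mono (image_mono ?_) (ih _ hy)
    rintro z ⟨hzs, hzx⟩
    refine ⟨fun j hj => ?_, fun j hj => ?_⟩
    · rcases Finset.mem_insert.1 hj with rfl | hj
      · rw [hzx j has, update_self]
        exact hw
      · exact hzs j hj
    · rw [Finset.mem_insert, not_or] at hj
      rw [hzx j hj.2, update_of_ne hj.1]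

lemma graph_mem_convexHull_graphOn_pi (hM : IsBlockMultilinear M)
    {V : (j : Fin k) → Set (Fin (n j) → ℝ)} {x : (j : Fin k) → Fin (n j) → ℝ}
    (hx : ∀ j, x j ∈ convexHull ℝ (V j)) :
    (x, M x) ∈ convexHull ℝ (graphOn M (univ.pi V)) := by
  have hpi : univ.pi V =
      {z | (∀ j ∈ Finset.univ, z j ∈ V j) ∧ ∀ j ∉ Finset.univ, z j = x j} := by
    ext z
    simp
  rw [hpi]
  exact hM.graph_mem_convexHull_graphOn_of_forall_mem V Finset.univ x fun j _ => hx j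

lemma convexHull_graphOn_iUnion_pi_convexHull {κ : Type*} (hM : IsBlockMultilinear M)
    (V : κ → (j : Fin k) → Set (Fin (n j) → ℝ)) :
    convexHull ℝ (graphOn M (⋃ i, {x | ∀ j, x j ∈ convexHull ℝ (V i j)})) =
      convexHull ℝ (graphOn M (⋃ i, univ.pi (V i))) := by
  refine le_antisymm (convexHull_min ?_ (convex_convexHull ℝ _)) ?_
  · rintro _ ⟨x, hx, rfl⟩
    obtain ⟨i, hi⟩ := mem_iUnion.1 hx
    exact convexHull_mono (image_mono (subset_iUnion (fun i => univ.pi (V i)) i))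
      (hM.graph_mem_convexHull_graphOn_pi hi)
  · exact convexHull_mono (image_mono (iUnion_mono fun i x hx j =>
      subset_convexHull ℝ _ (hx j (mem_univ j))))

lemma extremePoints_convexHull_graphOn_subset (hM : IsBlockMultilinear M)
    (H : Set ((j : Fin k) → Fin (n j) → ℝ)) :
    (convexHull ℝ (graphOn M H)).extremePoints ℝ ⊆ graphOn M (blockCornerSet H) := by
  intro p hp
  obtain ⟨v, hvH, rfl⟩ := extremePoints_convexHull_subset hp
  refine ⟨v, ⟨hvH, fun j => ?_⟩, rfl⟩
  obtain ⟨f, hf⟩ := hM.exists_affineMap_eq_graph_update v j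
  have hf_inj : Injective f := fun y₁ y₂ h => by
    simpa using congrArg (fun p => p.1 j) ((hf y₁).symm.trans (h.trans (hf y₂)))
  have hmaps :
      MapsTo f (convexHull ℝ {y | update v j y ∈ H}) (convexHull ℝ (graphOn M H)) := by
    rw [mapsTo_iff_image_subset, f.image_convexHull]
    refine convexHull_mono ?_
    rintro _ ⟨y, hy, rfl⟩
    exact ⟨update v j y, hy, (hf y).symm⟩
  have hvj : v j ∈ convexHull ℝ {y | update v j y ∈ H} :=
    subset_convexHull ℝ _ (by simpa using hvH)
  refine f.mem_extremePoints_of_map_mem_extremePoints hf_inj hmaps hvj ?_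
  rwa [hf, update_eq_self]

lemma convexHull_graphOn_eq_convexHull_graphOn_blockCornerSet (hM : IsBlockMultilinear M)
    {H W : Set ((j : Fin k) → Fin (n j) → ℝ)}
    (hHW : convexHull ℝ (graphOn M H) = convexHull ℝ (graphOn M W)) (hW : W.Finite) :
    convexHull ℝ (graphOn M H) = convexHull ℝ (graphOn M (blockCornerSet H)) := by
  have hWgraph : (graphOn M W).Finite := hW.image _
  refine (convexHull_mono (image_mono fun v hv => hv.1)).antisymm' ?_
  calc convexHull ℝ (graphOn M H)
      = convexHull ℝ ((convexHull ℝ (graphOn M H)).extremePoints ℝ) := by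
        rw [hHW, hWgraph.convexHull_extremePoints_convexHull]
    _ ⊆ convexHull ℝ (graphOn M (blockCornerSet H)) :=
        convexHull_mono (hM.extremePoints_convexHull_graphOn_subset H)

end IsBlockMultilinear

lemma blockCornerSet_iUnion_subset_pi {κ : Type*}
    (V : κ → (j : Fin k) → Set (Fin (n j) → ℝ)) :
    blockCornerSet (⋃ i, {x | ∀ j, x j ∈ convexHull ℝ (V i j)}) ⊆
      univ.pi fun j => ⋃ i, V i j := by
  rintro v ⟨hvH, hv⟩ j -
  obtain ⟨i, hi⟩ := mem_iUnion.1 hvH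
  have hslice :
      V i j ⊆ {y | update v j y ∈ ⋃ i, {x | ∀ j, x j ∈ convexHull ℝ (V i j)}} :=
    fun w hw => mem_iUnion.2 ⟨i, fun j' => by
      rcases eq_or_ne j' j with rfl | hj'
      · simpa using subset_convexHull ℝ _ hw
      · simpa [update_of_ne hj'] using hi j'⟩
  exact mem_iUnion.2 ⟨i, mem_of_mem_convexHull_of_mem_extremePoints hslice (hi j) (hv j)⟩

theorem multilinear_over_axis_aligned_region_corner_generated_general
    (k : ℕ) (n : Fin k → ℕ)
    (H : Set ((j : Fin k) → Fin (n j) → ℝ))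
    (hH : IsBlockAxisAligned H)
    (M : ((j : Fin k) → (Fin (n j) → ℝ)) → ℝ) (hM : IsBlockMultilinear M) :
    (blockCornerSet H).Finite ∧
    convexHull ℝ ((fun x : (j : Fin k) → Fin (n j) → ℝ => (x, M x)) '' H) =
      convexHull ℝ ((fun v : (j : Fin k) → Fin (n j) → ℝ => (v, M v)) ''
        blockCornerSet H) := by
  obtain ⟨N, V, -, rfl⟩ := hH
  let P : Fin N → (j : Fin k) → Set (Fin (n j) → ℝ) := fun i j => V i j
  have hP : ∀ i j, (P i j).Finite := fun i j => (V i j).finite_toSet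
  refine ⟨(Set.Finite.pi fun j => finite_iUnion fun i => hP i j).subset
    (blockCornerSet_iUnion_subset_pi P), ?_⟩
  exact hM.convexHull_graphOn_eq_convexHull_graphOn_blockCornerSet
    (hM.convexHull_graphOn_iUnion_pi_convexHull P) (finite_iUnion fun i => Set.Finite.pi (hP i))

/-- The convex hull of the graph of a multilinear function over a nonempty axis-aligned
region `H` equals the convex hull of the finitely many graph points over `corner(H)`;
in particular it is a polytope. -/
theorem multilinear_over_axis_aligned_region_corner_generated
    (k : ℕ) (hk : 0 < k) (n : Fin k → ℕ) (hn : ∀ j, 0 < n j)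
    (H : Set ((j : Fin k) → Fin (n j) → ℝ)) (hne : H.Nonempty)
    (hH : IsBlockAxisAligned H)
    (M : ((j : Fin k) → (Fin (n j) → ℝ)) → ℝ) (hM : IsBlockMultilinear M) :
    (blockCornerSet H).Finite ∧
    convexHull ℝ ((fun x : (j : Fin k) → Fin (n j) → ℝ => (x, M x)) '' H) =
      convexHull ℝ ((fun v : (j : Fin k) → Fin (n j) → ℝ => (v, M v)) ''
        blockCornerSet H) :=
  multilinear_over_axis_aligned_region_corner_generated_general k n H hH M hM
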